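/- For every ε ∈ (0,1] and every integer m ≥ 1, b_{m,ε}(x) − { log x + Σ_{j=1}^{m} log Φ_j(x) + ε log Φ_m(x) } → 0 as x → ∞. -/

import Mathlib

/-!
By the mean value theorem, `1/(ε Φ_m(x)^ε) − 1/(ε Φ_m(x+1)^ε) = Φ_m(c)^{−ε−1} ∏_{j<m} Φ_j(c)⁻¹`
for some `c ∈ (x, x+1)`, because `Φ_m' = ∏_{j<m} Φ_j⁻¹`. Minus the logarithm of the right-hand
side is exactly the comparison function `g(c) = log c + Σ_{j=1}^m log Φ_j(c) + ε log Φ_m(c)`,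
which is increasing, so `g(x) ≤ b_{m,ε}(x) ≤ g(x+1)`. Finally `g(x+1) − g(x) → 0`: since `log` is
1-Lipschitz on `[1, ∞)` and `Φ_{k+1} = 1 + log Φ_k`, the increments `log Φ_k(x+1) − log Φ_k(x)`
decrease in `k`, so all of them are at most `log (x+1) − log x`.
-/

open Filter Topology

/-- The iterated logarithm functions: `Phi 0 x = x`, `Phi (m+1) x = 1 + log (Phi m x)`,
so that `Phi 1 x = φ(x) = 1 + log x` and `Phi m = φ(Phi (m−1))`. -/
noncomputable def Phi : ℕ → ℝ → ℝ
  | 0, x => x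
  | m + 1, x => 1 + Real.log (Phi m x)

/-- The boundary `b_{m,ε}(x) = −log [1/(ε Φ_m(x)^ε) − 1/(ε Φ_m(x+1)^ε)]`. -/
noncomputable def bfun (m : ℕ) (ε : ℝ) (x : ℝ) : ℝ :=
  -Real.log (1 / (ε * Phi m x ^ ε) - 1 / (ε * Phi m (x + 1) ^ ε))

open Real Finset

lemma one_le_Phi (m : ℕ) {x : ℝ} (hx : 1 ≤ x) : 1 ≤ Phi m x := by
  induction m with
  | zero => exact hx
  | succ m ih => exact le_add_of_nonneg_right (log_nonneg ih)

lemma Phi_pos (m : ℕ) {x : ℝ} (hx : 1 ≤ x) : 0 < Phi m x :=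
  one_pos.trans_le (one_le_Phi m hx)

lemma Phi_le_Phi (m : ℕ) {s t : ℝ} (hs : 1 ≤ s) (hst : s ≤ t) : Phi m s ≤ Phi m t := by
  induction m with
  | zero => exact hst
  | succ m ih => exact add_le_add_right (log_le_log (Phi_pos m hs) ih) 1

lemma hasDerivAt_Phi (m : ℕ) {t : ℝ} (ht : 1 ≤ t) :
    HasDerivAt (Phi m) (∏ j ∈ range m, (Phi j t)⁻¹) t := by
  induction m with
  | zero => rw [prod_range_zero]; exact hasDerivAt_id t
  | succ m ih =>
    rw [prod_range_succ, mul_comm]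
    exact ((hasDerivAt_log (Phi_pos m ht).ne').comp t ih).const_add 1

noncomputable def tailDensity (m : ℕ) (ε t : ℝ) : ℝ :=
  Phi m t ^ (-ε - 1) * ∏ j ∈ range m, (Phi j t)⁻¹

lemma hasDerivAt_inv_mul_Phi_rpow_neg (m : ℕ) {ε t : ℝ} (hε : ε ≠ 0) (ht : 1 ≤ t) :
    HasDerivAt (fun s => ε⁻¹ * Phi m s ^ (-ε)) (-tailDensity m ε t) t := by
  refine (((hasDerivAt_Phi m ht).rpow_const (p := -ε)
    (Or.inl (Phi_pos m ht).ne')).const_mul ε⁻¹).congr_deriv ?_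
  rw [tailDensity]
  field_simp

noncomputable def bApprox (m : ℕ) (ε x : ℝ) : ℝ :=
  log x + ∑ j ∈ Icc 1 m, log (Phi j x) + ε * log (Phi m x)

lemma neg_log_tailDensity (m : ℕ) (ε : ℝ) {t : ℝ} (ht : 1 ≤ t) :
    -log (tailDensity m ε t) = bApprox m ε t := by
  have hpos := fun j => Phi_pos j ht
  have hsum : ∑ j ∈ range (m + 1), log (Phi j t) = log t + ∑ j ∈ Icc 1 m, log (Phi j t) := by
    rw [sum_range_eq_add_Ico _ (by omega : 0 < m + 1), Ico_add_one_right_eq_Icc]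
    rfl
  rw [sum_range_succ] at hsum
  rw [tailDensity, bApprox, log_mul (rpow_pos_of_pos (hpos m) _).ne'
      (prod_pos fun j _ => inv_pos.2 (hpos j)).ne', log_rpow (hpos m),
    log_prod fun j _ => inv_ne_zero (hpos j).ne']
  simp only [log_inv, sum_neg_distrib]
  linarith

lemma bApprox_le_bApprox (m : ℕ) {ε s t : ℝ} (hε : 0 ≤ ε) (hs : 1 ≤ s) (hst : s ≤ t) :
    bApprox m ε s ≤ bApprox m ε t := by
  have hlog : ∀ j, log (Phi j s) ≤ log (Phi j t) := fun j =>
    log_le_log (Phi_pos j hs) (Phi_le_Phi j hs hst)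
  exact add_le_add (add_le_add (hlog 0) (sum_le_sum fun j _ => hlog j))
    (mul_le_mul_of_nonneg_left (hlog m) hε)

lemma exists_bfun_eq_bApprox (m : ℕ) {ε x : ℝ} (hε : ε ≠ 0) (hx : 1 ≤ x) :
    ∃ c ∈ Set.Ioo x (x + 1), bfun m ε x = bApprox m ε c := by
  set F : ℝ → ℝ := fun s => ε⁻¹ * Phi m s ^ (-ε)
  have hF : ∀ t ∈ Set.Icc x (x + 1), HasDerivAt F (-tailDensity m ε t) t := fun t ht =>
    hasDerivAt_inv_mul_Phi_rpow_neg m hε (hx.trans ht.1)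
  obtain ⟨c, hc, hslope⟩ := exists_hasDerivAt_eq_slope F (fun t => -tailDensity m ε t)
    (lt_add_one x) (fun t ht => (hF t ht).continuousAt.continuousWithinAt)
    (fun t ht => hF t (Set.Ioo_subset_Icc_self ht))
  have hF_eq : ∀ s, 1 ≤ s → 1 / (ε * Phi m s ^ ε) = F s := fun s hs => by
    simp only [F, one_div, mul_inv, rpow_neg (Phi_pos m hs).le]
  refine ⟨c, hc, ?_⟩
  rw [bfun, hF_eq x hx, hF_eq (x + 1) (by linarith), ← neg_log_tailDensity m ε (hx.trans hc.1.le)]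
  rw [add_sub_cancel_left, div_one] at hslope
  rw [← neg_sub, ← hslope, neg_neg]

lemma bApprox_le_bfun_le_bApprox_add_one (m : ℕ) {ε x : ℝ} (hε : 0 < ε) (hx : 1 ≤ x) :
    bApprox m ε x ≤ bfun m ε x ∧ bfun m ε x ≤ bApprox m ε (x + 1) := by
  obtain ⟨c, hc, hb⟩ := exists_bfun_eq_bApprox m hε.ne' hx
  rw [hb]
  exact ⟨bApprox_le_bApprox m hε.le hx hc.1.le,
    bApprox_le_bApprox m hε.le (hx.trans hc.1.le) hc.2.le⟩

lemma log_sub_log_le_sub {y z : ℝ} (hz : 1 ≤ z) (hzy : z ≤ y) : log y - log z ≤ y - z := by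
  have hz0 : 0 < z := by linarith
  rw [← log_div (by linarith) hz0.ne']
  calc log (y / z) ≤ y / z - 1 := log_le_sub_one_of_pos (div_pos (by linarith) hz0)
    _ = (y - z) / z := by field_simp
    _ ≤ y - z := div_le_self (by linarith) hz

lemma log_Phi_add_one_sub_le (k : ℕ) {x : ℝ} (hx : 1 ≤ x) :
    log (Phi k (x + 1)) - log (Phi k x) ≤ log (x + 1) - log x := by
  induction k with
  | zero => exact le_rfl
  | succ k ih =>
    calc _ ≤ Phi (k + 1) (x + 1) - Phi (k + 1) x :=
          log_sub_log_le_sub (one_le_Phi _ hx) (Phi_le_Phi _ hx (by linarith))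
      _ = log (Phi k (x + 1)) - log (Phi k x) := by simp only [Phi]; ring
      _ ≤ _ := ih

lemma tendsto_log_Phi_add_one_sub (k : ℕ) :
    Tendsto (fun x => log (Phi k (x + 1)) - log (Phi k x)) atTop (𝓝 0) := by
  refine tendsto_of_tendsto_of_tendsto_of_le_of_le' tendsto_const_nhds
    (tendsto_log_comp_add_sub_log 1) ?_ ?_
  · filter_upwards [eventually_ge_atTop 1] with x hx
    exact sub_nonneg.2 (log_le_log (Phi_pos k hx) (Phi_le_Phi k hx (by linarith)))
  · filter_upwards [eventually_ge_atTop 1] with x hx using log_Phi_add_one_sub_le k hx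

lemma tendsto_bApprox_add_one_sub (m : ℕ) (ε : ℝ) :
    Tendsto (fun x => bApprox m ε (x + 1) - bApprox m ε x) atTop (𝓝 0) := by
  have hd := tendsto_log_Phi_add_one_sub
  have h := ((hd 0).add (tendsto_finsetSum (Icc 1 m) fun j _ => hd j)).add ((hd m).const_mul ε)
  simp only [sum_const_zero, mul_zero, add_zero] at h
  refine h.congr fun x => ?_
  simp only [bApprox, sum_sub_distrib, Phi]
  ring

theorem statement13_general (ε : ℝ) (hε0 : 0 < ε) (m : ℕ) :
    Tendsto (fun x : ℝ => bfun m ε x -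
        (Real.log x + ∑ j ∈ Finset.Icc 1 m, Real.log (Phi j x)
          + ε * Real.log (Phi m x)))
      atTop (𝓝 0) := by
  have hbounds := fun x (hx : 1 ≤ x) => bApprox_le_bfun_le_bApprox_add_one m hε0 hx
  change Tendsto (fun x => bfun m ε x - bApprox m ε x) atTop (𝓝 0)
  refine tendsto_of_tendsto_of_tendsto_of_le_of_le' tendsto_const_nhds
    (tendsto_bApprox_add_one_sub m ε) ?_ ?_
  · filter_upwards [eventually_ge_atTop 1] with x hx using sub_nonneg.2 (hbounds x hx).1
  · filter_upwards [eventually_ge_atTop 1] with x hx using sub_le_sub_right (hbounds x hx).2 _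

/-- As `x → ∞`,
`b_{m,ε}(x) = log x + Σ_{j=1}^m log Φ_j(x) + ε log Φ_m(x) + o(1)`. -/
theorem statement13 (ε : ℝ) (hε0 : 0 < ε) (hε1 : ε ≤ 1) (m : ℕ) (hm : 1 ≤ m) :
    Tendsto (fun x : ℝ => bfun m ε x -
        (Real.log x + ∑ j ∈ Finset.Icc 1 m, Real.log (Phi j x)
          + ε * Real.log (Phi m x)))
      atTop (𝓝 0) :=
  statement13_general ε hε0 m
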